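/- The minimal DFAO computing the 2^n-fold running sum (mod 2) of the Thue-Morse sequence, reading base-2 representations most significant digit first, has exactly 2^{n+3} states, for every n ≥ 0. -/

import Mathlib

/-- The Thue–Morse sequence: parity of the number of 1s in the binary representation. -/
def t (k : ℕ) : ℕ := (Nat.digits 2 k).sum % 2

/-- `ts m` is the m-fold iterated running sum (mod 2) of the Thue–Morse sequence. -/
def ts : ℕ → ℕ → ℕ
  | 0, k => t k
  | m + 1, k => (∑ j ∈ Finset.range (k + 1), ts m j) % 2

/-- The value of a binary string (msd-first). -/
def val (z : List Bool) : ℕ := z.foldl (fun a b => 2 * a + (if b then 1 else 0)) 0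

/-- The language of binary representations (with arbitrary leading zeros) of those `k`
with `ts (2^n) k = 1`. -/
def L (n : ℕ) : Set (List Bool) := {w | ts (2 ^ n) (val w) = 1}

/-- The Myhill–Nerode congruence of `L n`. -/
def mnRel (n : ℕ) (x y : List Bool) : Prop :=
  ∀ z : List Bool, (x ++ z ∈ L n ↔ y ++ z ∈ L n)

/-!
Over `𝔽₂` the running sum is multiplication of generating functions by `(1 - X)⁻¹`, and
`(1 - X)^(2^n) = 1 - X^(2^n)`, so `t_{2^n}(k) = ∑_{i ≤ k / 2^n} t(k - 2^n i)`. Since `t` is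
additive over disjoint binary blocks, this collapses to
`t_{2^n}(k) ≡ ⌊k / 2^(n+1)⌋ + (1 if bit n of k is set, else t(k)) (mod 2)`.
Hence the output only depends on `(k mod 2^(n+2), t(k))`, a pair updated digit by digit, and
every such pair is reached. Conversely, appending `n + 2` zeros to a prefix `v` reads off `t(v)`,
and appending `n + 1 - j` zeros then reads off bit `j` of `v` once the bits below it are known,
so distinct pairs are distinguishable: the pairs are exactly the `2^(n+3)` Myhill–Nerode classes.
-/
section ThueMorseSums

open Finset

lemma t_mul_two_pow_add {a r j : ℕ} (hr : r < 2 ^ j) :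
    (t (a * 2 ^ j + r) : ZMod 2) = t a + t r := by
  rcases a.eq_zero_or_pos with rfl | ha
  · simp [t]
  have hlen := (Nat.digits_length_le_iff one_lt_two r).2 hr
  have hdigits := Nat.digits_append_zeroes_append_digits (n := r)
    (k := j - (Nat.digits 2 r).length) one_lt_two ha
  rw [Nat.add_sub_cancel' hlen, add_comm r, mul_comm] at hdigits
  simp only [t, ZMod.natCast_mod, ← hdigits, List.sum_append, List.sum_replicate, smul_zero,
    add_zero, Nat.cast_add]
  ring

lemma t_mul_two_pow (a j : ℕ) : (t (a * 2 ^ j) : ZMod 2) = t a := by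
  simpa [t] using t_mul_two_pow_add (a := a) (j := j) (Nat.two_pow_pos j)

lemma t_two_mul_add_one (a : ℕ) : (t (2 * a + 1) : ZMod 2) = t a + 1 := by
  simpa [t, mul_comm] using t_mul_two_pow_add (a := a) (r := 1) (j := 1) one_lt_two

lemma ts_lt_two (m k : ℕ) : ts m k < 2 := by
  cases m <;> exact Nat.mod_lt _ two_pos

lemma ts_eq_iff_cast_eq {m m' k k' : ℕ} : ts m k = ts m' k' ↔ (ts m k : ZMod 2) = ts m' k' := by
  rw [ZMod.natCast_eq_natCast_iff', Nat.mod_eq_of_lt (ts_lt_two _ _),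
    Nat.mod_eq_of_lt (ts_lt_two _ _)]

def runningSum (a : ℕ → ZMod 2) (k : ℕ) : ZMod 2 := ∑ j ∈ range (k + 1), a j

lemma cast_ts_eq_iterate (m k : ℕ) :
    (ts m k : ZMod 2) = runningSum^[m] (fun j => (t j : ZMod 2)) k := by
  induction m generalizing k with
  | zero => rfl
  | succ m ih =>
    rw [Function.iterate_succ_apply', ts, ZMod.natCast_mod, Nat.cast_sum]
    simp only [runningSum, ih]

lemma sum_range_two_mul_t (N : ℕ) : ∑ j ∈ range (2 * N), (t j : ZMod 2) = N := by
  induction N with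
  | zero => simp
  | succ N ih =>
    have h2 : (t (2 * N) : ZMod 2) = t N := by simpa [mul_comm] using t_mul_two_pow N 1
    rw [mul_add_one, sum_range_succ, sum_range_succ, ih, h2, t_two_mul_add_one]
    push_cast
    linear_combination (t N : ZMod 2) * CharTwo.two_eq_zero (R := ZMod 2)

lemma ts_one (k : ℕ) :
    (ts 1 k : ZMod 2) = (k / 2 : ℕ) + if k % 2 = 1 then 1 else (t k : ZMod 2) := by
  rw [cast_ts_eq_iterate, Function.iterate_one, runningSum]
  obtain ⟨N, rfl | rfl⟩ := Nat.even_or_odd' k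
  · rw [sum_range_succ, sum_range_two_mul_t]
    simp
  · rw [show 2 * N + 1 + 1 = 2 * (N + 1) by ring, sum_range_two_mul_t]
    simp [show (2 * N + 1) / 2 = N by omega]

def strideSum (m : ℕ) (a : ℕ → ZMod 2) (k : ℕ) : ZMod 2 :=
  ∑ i ∈ range (k / m + 1), a (k - m * i)

lemma runningSum_eq_strideSum_one : runningSum = strideSum 1 := by
  ext a k
  rw [runningSum, strideSum, Nat.div_one, ← sum_range_reflect]
  refine sum_congr rfl fun i _ => ?_
  rw [one_mul, add_tsub_cancel_right]

lemma sum_range_succ_nsmul_eq_sum_even (f : ℕ → ZMod 2) (N : ℕ) :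
    ∑ p ∈ range N, (p + 1) • f p = ∑ q ∈ range ((N + 1) / 2), f (2 * q) := by
  induction N with
  | zero => simp
  | succ N ih =>
    rw [sum_range_succ, ih, nsmul_eq_mul]
    obtain ⟨M, rfl | rfl⟩ := Nat.even_or_odd' N
    · rw [show (2 * M + 1 + 1) / 2 = (2 * M + 1) / 2 + 1 by omega, sum_range_succ,
        show (2 * M + 1) / 2 = M by omega]
      simp [CharTwo.two_eq_zero]
    · rw [show (2 * M + 1 + 1 + 1) / 2 = (2 * M + 1 + 1) / 2 by omega]
      simp [one_add_one_eq_two, CharTwo.two_eq_zero]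

/-- The coefficient form of `((1 - X^m)⁻¹)² = (1 - X^(2m))⁻¹` over `𝔽₂`. -/
lemma strideSum_strideSum (m : ℕ) (a : ℕ → ZMod 2) :
    strideSum m (strideSum m a) = strideSum (2 * m) a := by
  ext k
  set Q := k / m
  have hinner : ∀ i ∈ range (Q + 1),
      strideSum m a (k - m * i) = ∑ j ∈ range (Q + 1 - i), a (k - m * (i + j)) := by
    intro i hi
    rw [strideSum, Nat.sub_mul_div, show Q - i + 1 = Q + 1 - i by grind]
    refine sum_congr rfl fun j _ => ?_
    rw [mul_add, Nat.sub_sub]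
  rw [strideSum, sum_congr rfl hinner,
    ← sum_range_diag_flip (Q + 1) fun i j => a (k - m * (i + j))]
  have hdiag : ∀ p ∈ range (Q + 1),
      ∑ i ∈ range (p + 1), a (k - m * (i + (p - i))) = (p + 1) • a (k - m * p) := by
    intro p _
    rw [← card_range (p + 1), ← sum_const, card_range]
    exact sum_congr rfl fun i hi => by rw [Nat.add_sub_cancel' (by grind)]
  rw [sum_congr rfl hdiag, sum_range_succ_nsmul_eq_sum_even, strideSum,
    show (Q + 1 + 1) / 2 = k / (2 * m) + 1 by rw [mul_comm, ← Nat.div_div_eq_div_mul]; omega]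
  simp only [mul_left_comm m 2, mul_assoc]

lemma iterate_runningSum_two_pow (n : ℕ) : runningSum^[2 ^ n] = strideSum (2 ^ n) := by
  induction n with
  | zero => rw [pow_zero, Function.iterate_one, runningSum_eq_strideSum_one]
  | succ n ih =>
    funext a
    rw [pow_succ, mul_two, Function.iterate_add_apply, ih, strideSum_strideSum, two_mul]

lemma ts_two_pow_eq_ts_one (n k : ℕ) :
    (ts (2 ^ n) k : ZMod 2) = ts 1 (k / 2 ^ n) + (k / 2 ^ n + 1 : ℕ) * t (k % 2 ^ n) := by
  set Q := k / 2 ^ n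
  have hterm : ∀ i ∈ range (Q + 1),
      (t (k - 2 ^ n * i) : ZMod 2) = t (Q - i) + t (k % 2 ^ n) := by
    intro i hi
    have hi : i ≤ Q := Nat.le_of_lt_succ (mem_range.1 hi)
    have hk : k - 2 ^ n * i = (Q - i) * 2 ^ n + k % 2 ^ n := by
      have := Nat.div_add_mod k (2 ^ n)
      have := Nat.mul_le_mul_left (2 ^ n) hi
      rw [Nat.sub_mul]
      grind
    rw [hk, t_mul_two_pow_add (Nat.mod_lt _ (Nat.two_pow_pos n))]
  have hreflect :
      ∑ i ∈ range (Q + 1), (t (Q - i) : ZMod 2) = ∑ j ∈ range (Q + 1), (t j : ZMod 2) := by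
    simpa using sum_range_reflect (fun j => (t j : ZMod 2)) (Q + 1)
  rw [cast_ts_eq_iterate, iterate_runningSum_two_pow, strideSum, sum_congr rfl hterm,
    sum_add_distrib, hreflect, sum_const, card_range, nsmul_eq_mul, cast_ts_eq_iterate 1,
    Function.iterate_one, runningSum]

theorem ts_two_pow (n k : ℕ) :
    (ts (2 ^ n) k : ZMod 2) =
      (k / 2 ^ (n + 1) : ℕ) + if k / 2 ^ n % 2 = 1 then 1 else (t k : ZMod 2) := by
  have ht : (t k : ZMod 2) = t (k / 2 ^ n) + t (k % 2 ^ n) := by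
    conv_lhs => rw [← Nat.div_add_mod' k (2 ^ n)]
    exact t_mul_two_pow_add (Nat.mod_lt _ (Nat.two_pow_pos n))
  rw [ts_two_pow_eq_ts_one, ts_one, ht, pow_succ, ← Nat.div_div_eq_div_mul]
  obtain ⟨Q, hQ | hQ⟩ := Nat.even_or_odd' (k / 2 ^ n)
  · have hcast : ((2 * Q + 1 : ℕ) : ZMod 2) = 1 := by simp [CharTwo.two_eq_zero]
    simp [hQ, hcast, add_assoc]
  · have hcast : ((2 * Q + 1 + 1 : ℕ) : ZMod 2) = 0 := by
      simp [one_add_one_eq_two, CharTwo.two_eq_zero]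
    simp [hQ, hcast, show (2 * Q + 1) / 2 = Q by omega]

end ThueMorseSums

lemma div_two_pow_mod_two_congr {a b m i : ℕ} (h : a % 2 ^ m = b % 2 ^ m) (hi : i < m) :
    a / 2 ^ i % 2 = b / 2 ^ i % 2 := by
  have hdvd : 2 ^ (i + 1) ∣ 2 ^ m := pow_dvd_pow 2 hi
  rw [← Nat.mod_mul_right_div_self, ← Nat.mod_mul_right_div_self, ← pow_succ,
    ← Nat.mod_mod_of_dvd a hdvd, ← Nat.mod_mod_of_dvd b hdvd, h]

/-- The state reached by the minimal DFAO on any representation of `v`. -/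
def tmState (n v : ℕ) : ZMod (2 ^ (n + 2)) × ZMod 2 := (v, t v)

lemma tmState_eq_iff {n v v' : ℕ} :
    tmState n v = tmState n v' ↔
      v % 2 ^ (n + 2) = v' % 2 ^ (n + 2) ∧ (t v : ZMod 2) = t v' := by
  rw [tmState, tmState, Prod.ext_iff, ZMod.natCast_eq_natCast_iff']

lemma tmState_surjective (n : ℕ) : Function.Surjective (tmState n) := by
  rintro ⟨a, p⟩
  set c := (p - t a.val).val
  refine ⟨c * 2 ^ (n + 2) + a.val, Prod.ext ?_ ?_⟩
  · simp [tmState]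
  · have hc : c < 2 := ZMod.val_lt _
    have htc : (t c : ZMod 2) = c := by interval_cases c <;> rfl
    rw [tmState, t_mul_two_pow_add (ZMod.val_lt a), htc, ZMod.natCast_zmod_val]
    ring

lemma tmState_mul_two_pow_add {n v v' L w : ℕ} (h : tmState n v = tmState n v')
    (hw : w < 2 ^ L) : tmState n (v * 2 ^ L + w) = tmState n (v' * 2 ^ L + w) := by
  simp only [tmState, Prod.ext_iff] at h ⊢
  push_cast
  rw [t_mul_two_pow_add hw, t_mul_two_pow_add hw, h.1, h.2]
  exact ⟨rfl, rfl⟩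

lemma ts_two_pow_congr {n k k' : ℕ} (h : tmState n k = tmState n k') :
    ts (2 ^ n) k = ts (2 ^ n) k' := by
  obtain ⟨hmod, ht⟩ := tmState_eq_iff.1 h
  rw [ts_eq_iff_cast_eq, ts_two_pow, ts_two_pow, ht, div_two_pow_mod_two_congr hmod (by omega),
    (ZMod.natCast_eq_natCast_iff' _ _ _).2 (div_two_pow_mod_two_congr hmod (by omega))]

lemma ts_two_pow_mul_two_pow_add_two (n v : ℕ) :
    (ts (2 ^ n) (v * 2 ^ (n + 2)) : ZMod 2) = t v := by
  have h1 : v * 2 ^ (n + 2) / 2 ^ (n + 1) = 2 * v := by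
    rw [pow_succ 2 (n + 1), mul_comm _ 2, ← mul_assoc, Nat.mul_div_cancel _ (Nat.two_pow_pos _),
      mul_comm]
  have h0 : v * 2 ^ (n + 2) / 2 ^ n = 2 * (2 * v) := by
    rw [pow_add, mul_comm (2 ^ n), ← mul_assoc, Nat.mul_div_cancel _ (Nat.two_pow_pos _)]; ring
  rw [ts_two_pow, h1, h0, t_mul_two_pow]
  simp [CharTwo.two_eq_zero]

lemma div_two_pow_mod_two_eq_of_ts_eq {n v v' j : ℕ} (hj : j ≤ n + 1)
    (hlow : v % 2 ^ j = v' % 2 ^ j) (ht : (t v : ZMod 2) = t v')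
    (h : ts (2 ^ n) (v * 2 ^ (n + 1 - j)) = ts (2 ^ n) (v' * 2 ^ (n + 1 - j))) :
    v / 2 ^ j % 2 = v' / 2 ^ j % 2 := by
  set L := n + 1 - j
  have hpow : 2 ^ (n + 1) = 2 ^ j * 2 ^ L := by rw [← pow_add]; congr 1; omega
  have hhigh : ∀ x, x * 2 ^ L / 2 ^ (n + 1) = x / 2 ^ j := fun x => by
    rw [hpow, Nat.mul_div_mul_right _ _ (Nat.two_pow_pos L)]
  have hbit : v * 2 ^ L / 2 ^ n % 2 = v' * 2 ^ L / 2 ^ n % 2 := by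
    refine div_two_pow_mod_two_congr (m := n + 1) ?_ (by omega)
    rw [hpow, Nat.mul_mod_mul_right, Nat.mul_mod_mul_right, hlow]
  rw [ts_eq_iff_cast_eq, ts_two_pow, ts_two_pow, hhigh, hhigh, hbit, t_mul_two_pow,
    t_mul_two_pow, ht, add_left_inj] at h
  exact (ZMod.natCast_eq_natCast_iff' _ _ _).1 h

lemma tmState_eq_of_ts_eq {n v v' : ℕ}
    (h : ∀ L, ts (2 ^ n) (v * 2 ^ L) = ts (2 ^ n) (v' * 2 ^ L)) : tmState n v = tmState n v' := by
  have ht : (t v : ZMod 2) = t v' := by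
    rw [← ts_two_pow_mul_two_pow_add_two n v, ← ts_two_pow_mul_two_pow_add_two n v',
      ← ts_eq_iff_cast_eq]
    exact h (n + 2)
  have hlow : ∀ j ≤ n + 2, v % 2 ^ j = v' % 2 ^ j := by
    intro j hj
    induction j with
    | zero => simp [Nat.mod_one]
    | succ j ih =>
      rw [Nat.mod_pow_succ, Nat.mod_pow_succ, ih (by omega),
        div_two_pow_mod_two_eq_of_ts_eq (by omega) (ih (by omega)) ht (h _)]
  exact tmState_eq_iff.2 ⟨hlow (n + 2) le_rfl, ht⟩

lemma val_append_singleton (x : List Bool) (b : Bool) : val (x ++ [b]) = Nat.bit b (val x) := by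
  cases b <;> simp [val, Nat.bit_val]

lemma val_append (x z : List Bool) : val (x ++ z) = val x * 2 ^ z.length + val z := by
  induction z using List.reverseRecOn with
  | nil => simp [val]
  | append_singleton z b ih =>
    rw [← List.append_assoc, val_append_singleton, val_append_singleton, ih, Nat.bit_val,
      Nat.bit_val, List.length_append, List.length_singleton, pow_succ]
    ring

lemma val_lt_two_pow_length (z : List Bool) : val z < 2 ^ z.length := by
  induction z using List.reverseRecOn with
  | nil => simp [val]
  | append_singleton z b ih =>
    rw [val_append_singleton, Nat.bit_val, List.length_append, List.length_singleton, pow_succ]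
    cases b <;> simp <;> omega

lemma val_replicate_false (m : ℕ) : val (List.replicate m false) = 0 := by
  induction m with
  | zero => rfl
  | succ m ih => rw [List.replicate_succ', val_append_singleton, ih]; rfl

lemma val_surjective : Function.Surjective val := by
  intro v
  induction v using Nat.binaryRec with
  | zero => exact ⟨[], rfl⟩
  | bit b v ih =>
    obtain ⟨x, rfl⟩ := ih
    exact ⟨x ++ [b], val_append_singleton x b⟩

lemma append_mem_L_iff (n : ℕ) (x z : List Bool) :
    x ++ z ∈ L n ↔ ts (2 ^ n) (val x * 2 ^ z.length + val z) = 1 := by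
  rw [← val_append]
  rfl

lemma mnRel_iff_tmState_eq (n : ℕ) (x y : List Bool) :
    mnRel n x y ↔ tmState n (val x) = tmState n (val y) := by
  constructor
  · intro h
    refine tmState_eq_of_ts_eq fun m => ?_
    have hm := h (List.replicate m false)
    rw [append_mem_L_iff, append_mem_L_iff, val_replicate_false, List.length_replicate,
      add_zero, add_zero] at hm
    have := ts_lt_two (2 ^ n) (val x * 2 ^ m)
    have := ts_lt_two (2 ^ n) (val y * 2 ^ m)
    omega
  · intro h z
    rw [append_mem_L_iff, append_mem_L_iff,
      ts_two_pow_congr (tmState_mul_two_pow_add h (val_lt_two_pow_length z))]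

/-- The minimal DFAO computing `ts (2^n)` (msd-first, base 2) has exactly `2^(n+3)`
states, i.e., the Myhill–Nerode congruence has exactly `2^(n+3)` classes. -/
theorem tm_min_states (n : ℕ) :
    Nat.card (Quot (mnRel n)) = 2 ^ (n + 3) := by
  have hker : mnRel n = (Setoid.ker (tmState n ∘ val)).r :=
    funext₂ fun x y => propext (mnRel_iff_tmState_eq n x y)
  calc Nat.card (Quot (mnRel n)) = Nat.card (ZMod (2 ^ (n + 2)) × ZMod 2) := by
        rw [hker]
        exact Nat.card_congr (Setoid.quotientKerEquivOfSurjective _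
          ((tmState_surjective n).comp val_surjective))
    _ = 2 ^ (n + 3) := by rw [Nat.card_prod, Nat.card_zmod, Nat.card_zmod, ← pow_succ]
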